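/- Suppose X is a Hilbert space over 𝕂 and fix m ∈ V. Then for every signal f : V → X, ‖T_m f‖_2 ≤ ‖u(m)‖_∞ · ‖f‖_2, where ‖u(m)‖_∞ = max_{1≤k≤N} |u_k(m)|. Moreover, if X is nontrivial, this bound is sharp: the operator norm of T_m : L^2(V,X) → L^2(V,X) equals ‖u(m)‖_∞. -/

import Mathlib

open Finset
open scoped ENNReal

/-- The `L^p` norm of a signal `f : Fin N → E` (sup-norm when `p = ∞`). -/
noncomputable def gsNorm {E : Type*} [NormedAddCommGroup E] {N : ℕ} (p : ℝ≥0∞)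
    (f : Fin N → E) : ℝ :=
  if p = ∞ then ⨆ n, ‖f n‖ else (∑ n, ‖f n‖ ^ p.toReal) ^ (1 / p.toReal)

/-- `u k` is the `k`-th column of a unitary matrix, i.e. the family of columns is
orthonormal for the standard inner product on `𝕂^N` (hence an orthonormal basis). -/
def OrthoBasis {𝕂 : Type*} [RCLike 𝕂] {N : ℕ} (u : Fin N → Fin N → 𝕂) : Prop :=
  ∀ k l : Fin N, ∑ n, (starRingEnd 𝕂) (u k n) * u l n = if k = l then (1 : 𝕂) else 0

/-- Graph Fourier transform: `f̂ k = ∑ n, conj (u k n) • f n`. -/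
noncomputable def gft {𝕂 : Type*} [RCLike 𝕂] {X : Type*} [NormedAddCommGroup X]
    [NormedSpace 𝕂 X] {N : ℕ} (u : Fin N → Fin N → 𝕂) (f : Fin N → X) : Fin N → X :=
  fun k => ∑ n, (starRingEnd 𝕂) (u k n) • f n

/-- `p`-coherence `κ_p(U)`: the maximum of the `ℓ^p` norms of the columns of `U`. -/
noncomputable def coh {𝕂 : Type*} [RCLike 𝕂] {N : ℕ} (p : ℝ≥0∞)
    (u : Fin N → Fin N → 𝕂) : ℝ :=
  ⨆ k, gsNorm p (u k)

/-- Mixed norm `‖U‖_{p,q}`: the `ℓ^q` norm of the vector of `ℓ^p` norms of the columns. -/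
noncomputable def mixNorm {𝕂 : Type*} [RCLike 𝕂] {N : ℕ} (p q : ℝ≥0∞)
    (u : Fin N → Fin N → 𝕂) : ℝ :=
  gsNorm q (fun k => gsNorm p (u k))

/-- Graph convolution of a scalar signal `α` with a signal `f`:
`(α*f)(n) = ∑ k, u k n • (α̂ k • f̂ k)`. -/
noncomputable def gconv {𝕂 : Type*} [RCLike 𝕂] {X : Type*} [NormedAddCommGroup X]
    [NormedSpace 𝕂 X] {N : ℕ} (u : Fin N → Fin N → 𝕂) (α : Fin N → 𝕂)
    (f : Fin N → X) : Fin N → X :=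
  fun n => ∑ k, u k n • (gft u α k • gft u f k)

/-- Graph translation operator `T_m f (n) = ∑ k, (u k n * conj (u k m)) • f̂ k`. -/
noncomputable def gtrans {𝕂 : Type*} [RCLike 𝕂] {X : Type*} [NormedAddCommGroup X]
    [NormedSpace 𝕂 X] {N : ℕ} (u : Fin N → Fin N → 𝕂) (m : Fin N)
    (f : Fin N → X) : Fin N → X :=
  fun n => ∑ k, (u k n * (starRingEnd 𝕂) (u k m)) • gft u f k

/-!
The columns `u k` form an orthonormal basis, so the matrix `U` with these columns is unitary and
acts isometrically on `L^2(V, X)`. Both the graph Fourier transform (multiplication by `Uᴴ`) and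
the synthesis `g ↦ ∑ k, u k • g k` are therefore isometries, and `T_m` is the Fourier multiplier
with symbol `k ↦ conj (u k m)`. A multiplier has `L^2`-operator norm at most the sup of its
symbol, with equality on the Fourier mode `u k₀ • x` of a maximal entry `k₀`.
-/

open scoped InnerProductSpace

section Norms

variable {E : Type*} [NormedAddCommGroup E] {N : ℕ}

lemma gsNorm_two_eq_sqrt (f : Fin N → E) : gsNorm 2 f = √(∑ n, ‖f n‖ ^ 2) := by
  simp [gsNorm, Real.sqrt_eq_rpow]

lemma gsNorm_congr_norm {F : Type*} [NormedAddCommGroup F] (p : ℝ≥0∞) {f : Fin N → E}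
    {g : Fin N → F} (h : ∀ n, ‖f n‖ = ‖g n‖) : gsNorm p f = gsNorm p g := by
  simp only [gsNorm, h]

lemma gsNorm_two_single (k : Fin N) (x : E) :
    gsNorm 2 (Pi.single k x) = ‖x‖ := by
  rw [gsNorm_two_eq_sqrt, Finset.sum_eq_single k (fun j _ hj => by simp [hj]) (by simp),
    Pi.single_eq_same, Real.sqrt_sq (norm_nonneg x)]

lemma gsNorm_top_eq_iSup (f : Fin N → E) : gsNorm ∞ f = ⨆ n, ‖f n‖ := if_pos rfl

lemma norm_le_gsNorm_top (f : Fin N → E) (n : Fin N) : ‖f n‖ ≤ gsNorm ∞ f :=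
  gsNorm_top_eq_iSup f ▸ le_ciSup (f := fun n => ‖f n‖) (Set.finite_range _).bddAbove n

lemma exists_gsNorm_top_eq [NeZero N] (f : Fin N → E) : ∃ k, gsNorm ∞ f = ‖f k‖ := by
  obtain ⟨k, hk⟩ := Finite.exists_max fun n => ‖f n‖
  exact ⟨k, le_antisymm (gsNorm_top_eq_iSup f ▸ ciSup_le hk) (norm_le_gsNorm_top f k)⟩

variable {𝕜 : Type*} [NormedField 𝕜] [NormedSpace 𝕜 E]

lemma gsNorm_two_smul_le (a : Fin N → 𝕜) (g : Fin N → E) :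
    gsNorm 2 (fun k => a k • g k) ≤ gsNorm ∞ a * gsNorm 2 g := by
  have hM0 : 0 ≤ gsNorm ∞ a := gsNorm_top_eq_iSup a ▸ Real.iSup_nonneg fun k => norm_nonneg (a k)
  rw [gsNorm_two_eq_sqrt, gsNorm_two_eq_sqrt, ← Real.sqrt_sq hM0, ← Real.sqrt_mul (sq_nonneg _),
    Finset.mul_sum]
  gcongr with k
  rw [norm_smul, mul_pow]
  gcongr
  exact norm_le_gsNorm_top a k

lemma gsNorm_two_smul_single (a : Fin N → 𝕜) (k : Fin N) (x : E) :
    gsNorm 2 (fun l => a l • (Pi.single k x : Fin N → E) l) = ‖a k‖ * ‖x‖ := by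
  have hsingle : (fun l => a l • (Pi.single k x : Fin N → E) l) = Pi.single k (a k • x) := by
    funext l
    rcases eq_or_ne l k with rfl | hl <;> simp [*]
  rw [hsingle, gsNorm_two_single, norm_smul]

end Norms

section Unitary

variable {𝕂 : Type*} [RCLike 𝕂] {X : Type*} [NormedAddCommGroup X] [InnerProductSpace 𝕂 X]

lemma Matrix.sum_norm_sq_sum_smul_of_mem_unitaryGroup {ι : Type*} [Fintype ι] [DecidableEq ι]
    {A : Matrix ι ι 𝕂} (hA : A ∈ Matrix.unitaryGroup ι 𝕂) (c : ι → X) :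
    ∑ i, ‖∑ j, A i j • c j‖ ^ 2 = ∑ j, ‖c j‖ ^ 2 := by
  have hAA : ∀ j l, ∑ i, (starRingEnd 𝕂) (A i j) * A i l = if j = l then 1 else 0 :=
    fun j l => by
      simpa [Matrix.mul_apply, Matrix.one_apply] using
        congrFun (congrFun (Matrix.mem_unitaryGroup_iff'.mp hA) j) l
  have hinner : ∑ i, ⟪∑ j, A i j • c j, ∑ l, A i l • c l⟫_𝕂 = ∑ j, ⟪c j, c j⟫_𝕂 :=
    calc _ = ∑ i, ∑ j, ∑ l, (starRingEnd 𝕂) (A i j) * A i l * ⟪c j, c l⟫_𝕂 := by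
          simp_rw [sum_inner, inner_sum, inner_smul_left, inner_smul_right, mul_assoc]
      _ = ∑ j, ∑ l, (∑ i, (starRingEnd 𝕂) (A i j) * A i l) * ⟪c j, c l⟫_𝕂 := by
          simp only [Finset.sum_mul]
          rw [Finset.sum_comm]
          exact Finset.sum_congr rfl fun j _ => Finset.sum_comm
      _ = _ := by simp [hAA]
  simpa [inner_self_eq_norm_sq] using congrArg RCLike.re hinner

lemma gsNorm_two_sum_smul_of_mem_unitaryGroup {N : ℕ} {A : Matrix (Fin N) (Fin N) 𝕂}
    (hA : A ∈ Matrix.unitaryGroup (Fin N) 𝕂) (c : Fin N → X) :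
    gsNorm 2 (fun i => ∑ j, A i j • c j) = gsNorm 2 c := by
  simp only [gsNorm_two_eq_sqrt, Matrix.sum_norm_sq_sum_smul_of_mem_unitaryGroup hA]

end Unitary

section GraphFourier

variable {𝕂 : Type*} [RCLike 𝕂] {X : Type*} [NormedAddCommGroup X] [InnerProductSpace 𝕂 X]
  {N : ℕ} {u : Fin N → Fin N → 𝕂}

lemma orthoBasis_iff_mem_unitaryGroup :
    OrthoBasis u ↔ Matrix.of (fun n k => u k n) ∈ Matrix.unitaryGroup (Fin N) 𝕂 := by
  rw [Matrix.mem_unitaryGroup_iff', ← Matrix.ext_iff]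
  simp [OrthoBasis, Matrix.mul_apply, Matrix.one_apply]

lemma gsNorm_two_gft (hU : OrthoBasis u) (f : Fin N → X) : gsNorm 2 (gft u f) = gsNorm 2 f :=
  gsNorm_two_sum_smul_of_mem_unitaryGroup
    (Unitary.star_mem (orthoBasis_iff_mem_unitaryGroup.mp hU)) f

lemma gsNorm_two_gtrans (hU : OrthoBasis u) (m : Fin N) (f : Fin N → X) :
    gsNorm 2 (gtrans u m f) = gsNorm 2 (fun k => (starRingEnd 𝕂) (u k m) • gft u f k) := by
  rw [← gsNorm_two_sum_smul_of_mem_unitaryGroup (orthoBasis_iff_mem_unitaryGroup.mp hU)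
    (fun k => (starRingEnd 𝕂) (u k m) • gft u f k)]
  simp only [Matrix.of_apply, smul_smul]
  rfl

lemma gft_smul_column (hU : OrthoBasis u) (k : Fin N) (x : X) :
    gft u (fun n => u k n • x) = Pi.single k x := by
  funext l
  simp only [gft, smul_smul, ← Finset.sum_smul, hU l k, Pi.single_apply, ite_smul, one_smul,
    zero_smul]

end GraphFourier

theorem gtrans_norm_two_general {𝕂 : Type*} [RCLike 𝕂] {X : Type*} [NormedAddCommGroup X]
    [InnerProductSpace 𝕂 X] {N : ℕ} (hN : 0 < N)
    (u : Fin N → Fin N → 𝕂) (hU : OrthoBasis u) (m : Fin N) :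
    (∀ f : Fin N → X,
      gsNorm 2 (gtrans u m f) ≤ gsNorm ∞ (fun k => u k m) * gsNorm 2 f) ∧
    (Nontrivial X → ∃ f : Fin N → X, f ≠ 0 ∧
      gsNorm 2 (gtrans u m f) = gsNorm ∞ (fun k => u k m) * gsNorm 2 f) := by
  have : NeZero N := ⟨hN.ne'⟩
  refine ⟨fun f => ?_, fun _ => ?_⟩
  · calc gsNorm 2 (gtrans u m f)
        = gsNorm 2 (fun k => (starRingEnd 𝕂) (u k m) • gft u f k) := gsNorm_two_gtrans hU m f
      _ ≤ gsNorm ∞ (fun k => (starRingEnd 𝕂) (u k m)) * gsNorm 2 (gft u f) :=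
          gsNorm_two_smul_le _ _
      _ = gsNorm ∞ (fun k => u k m) * gsNorm 2 f := by
          rw [gsNorm_congr_norm ∞ fun k => RCLike.norm_conj (u k m), gsNorm_two_gft hU]
  · obtain ⟨k, hk⟩ := exists_gsNorm_top_eq fun k => u k m
    obtain ⟨x, hx⟩ := exists_ne (0 : X)
    have hf := gft_smul_column hU k x
    refine ⟨fun n => u k n • x, fun h0 => hx ?_, ?_⟩
    · rw [h0] at hf
      simpa [gft] using (congrFun hf k).symm
    · rw [gsNorm_two_gtrans hU, ← gsNorm_two_gft hU (fun n => u k n • x), hf,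
        gsNorm_two_smul_single, gsNorm_two_single, hk, RCLike.norm_conj]

/-- for a Hilbert space `X`, `‖T_m f‖_2 ≤ ‖u(m)‖_∞·‖f‖_2`, and for
nontrivial `X` the bound is sharp (attained at a nonzero signal). -/
theorem gtrans_norm_two {𝕂 : Type*} [RCLike 𝕂] {X : Type*} [NormedAddCommGroup X]
    [InnerProductSpace 𝕂 X] [CompleteSpace X] {N : ℕ} (hN : 0 < N)
    (u : Fin N → Fin N → 𝕂) (hU : OrthoBasis u) (m : Fin N) :
    (∀ f : Fin N → X,
      gsNorm 2 (gtrans u m f) ≤ gsNorm ∞ (fun k => u k m) * gsNorm 2 f) ∧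
    (Nontrivial X → ∃ f : Fin N → X, f ≠ 0 ∧
      gsNorm 2 (gtrans u m f) = gsNorm ∞ (fun k => u k m) * gsNorm 2 f) :=
  gtrans_norm_two_general hN u hU m
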